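/- arXiv:1805.08822 — 2 statements merged into one kernel-verified Lean document; each statement's English description precedes it below -/
import Mathlib

section
/- For all real u, v with v ≠ 0 and all α > 0, |sin(u/v)| ≤ (ln(|u| + e^α) / ln(|v| + e^α))^α. -/
open Real

/-- Key monotonicity lemma: for 0 < t ≤ s and c = exp α,
    t/s ≤ (ln(t+c)/ln(s+c))^α. -/
lemma key_ratio (α t s : ℝ) (hα : 0 < α) (ht : 0 < t) (hts : t ≤ s) :
    t / s ≤ (Real.log (t + Real.exp α) / Real.log (s + Real.exp α)) ^ α := by
  set c := Real.exp α with hc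
  have hcpos : 0 < c := Real.exp_pos α
  have hs : 0 < s := lt_of_lt_of_le ht hts
  have htc : 0 < t + c := by linarith
  have hsc : 0 < s + c := by linarith
  set Lt := Real.log (t + c) with hLt
  set Ls := Real.log (s + c) with hLs
  have hαLt : α ≤ Lt := by
    have : Real.log c ≤ Lt := Real.log_le_log hcpos (by linarith)
    rwa [hc, Real.log_exp] at this
  have hLtpos : 0 < Lt := lt_of_lt_of_le hα hαLt
  have hLts : Lt ≤ Ls := Real.log_le_log htc (by linarith)
  have hLspos : 0 < Ls := lt_of_lt_of_le hLtpos hLts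
  -- step 1 : Ls - Lt ≤ log (s/t)
  have h1 : Ls - Lt ≤ Real.log (s / t) := by
    rw [hLs, hLt, ← Real.log_div (ne_of_gt hsc) (ne_of_gt htc)]
    apply Real.log_le_log (by positivity)
    rw [div_le_div_iff₀ htc ht]
    nlinarith
  have hlogst : 0 ≤ Real.log (s / t) := Real.log_nonneg (by
    rw [le_div_iff₀ ht]; linarith)
  -- step 2 : Ls / Lt ≤ 1 + (1/α) * log (s/t)
  have h2 : Ls / Lt ≤ 1 + (1 / α) * Real.log (s / t) := by
    rw [div_le_iff₀ hLtpos]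
    have : (1 / α) * Real.log (s / t) * α ≤ (1 / α) * Real.log (s / t) * Lt := by
      apply mul_le_mul_of_nonneg_left hαLt (by positivity)
    have hcalc : (1 / α) * Real.log (s / t) * α = Real.log (s / t) := by
      field_simp
    nlinarith
  -- step 3 : 1 + (1/α) * log (s/t) ≤ (s/t)^(1/α)
  have h3 : 1 + (1 / α) * Real.log (s / t) ≤ (s / t) ^ (1 / α) := by
    have := Real.add_one_le_exp ((1 / α) * Real.log (s / t))
    rw [Real.rpow_def_of_pos (by positivity), mul_comm (Real.log (s / t))]
    linarith
  have h4 : Ls / Lt ≤ (s / t) ^ (1 / α) := le_trans h2 h3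
  -- raise to power α
  have h5 : (Ls / Lt) ^ α ≤ s / t := by
    have := Real.rpow_le_rpow (by positivity) h4 (le_of_lt hα)
    rwa [← Real.rpow_mul (by positivity), one_div,
      inv_mul_cancel₀ (ne_of_gt hα), Real.rpow_one] at this
    
  -- invert
  have hLL : (0:ℝ) < (Ls / Lt) ^ α := Real.rpow_pos_of_pos (by positivity) α
  have h6 : t / s ≤ ((Ls / Lt) ^ α)⁻¹ := by
    rw [le_inv_comm₀ (by positivity) hLL]
    rwa [inv_div]
  calc t / s ≤ ((Ls / Lt) ^ α)⁻¹ := h6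
    _ = (Lt / Ls) ^ α := by
        rw [← Real.inv_rpow (by positivity), inv_div]

theorem sin_div_le_log_pow (u v α : ℝ) (hv : v ≠ 0) (hα : 0 < α) :
    |Real.sin (u / v)| ≤
      (Real.log (|u| + Real.exp α) / Real.log (|v| + Real.exp α)) ^ α := by
  have hcpos : 0 < Real.exp α := Real.exp_pos α
  have hc1 : 1 < Real.exp α := by
    have := Real.add_one_le_exp α; linarith
  have hvpos : 0 < |v| := abs_pos.mpr hv
  have hLv : 0 < Real.log (|v| + Real.exp α) := Real.log_pos (by linarith)
  have hLu : 0 < Real.log (|u| + Real.exp α) :=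
    Real.log_pos (by have := abs_nonneg u; linarith)
  rcases le_or_gt (|u|) (|v|) with h | h
  · -- |u| ≤ |v| : use |sin x| ≤ |x|
    rcases eq_or_lt_of_le (abs_nonneg u) with h0 | h0
    · have hu0 : u = 0 := abs_eq_zero.mp h0.symm
      simp [hu0]
      positivity
    · have hsin : |Real.sin (u / v)| ≤ |u / v| := Real.abs_sin_le_abs
      have huv : |u / v| = |u| / |v| := abs_div u v
      calc |Real.sin (u / v)| ≤ |u| / |v| := by rwa [huv] at hsin
        _ ≤ _ := key_ratio α (|u|) (|v|) hα h0 h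
  · -- |v| < |u| : RHS ≥ 1
    have hratio : 1 ≤ Real.log (|u| + Real.exp α) / Real.log (|v| + Real.exp α) := by
      rw [le_div_iff₀ hLv, one_mul]
      exact Real.log_le_log (by linarith) (by linarith)
    calc |Real.sin (u / v)| ≤ 1 := Real.abs_sin_le_one _
      _ ≤ _ := Real.one_le_rpow hratio (le_of_lt hα)
end

section
/- Let Z : [0,∞) → (0,∞) be continuous, increasing, with u/Z(u) nondecreasing for u > u₀ (u₀ ≥ 0). Fix coefficients a₁,…,a_N and define I(t,x,λ) = cos(xλ + t·Σ_{k=1}^N a_k λ^{2k+1}(−1)^k). Then for all t, t₁, x, x₁ with x ≠ x₁ and t ≠ t₁, |I(t,x,λ) − I(t₁,x₁,λ)| ≤ 2·Z(|λ|/2 + u₀)/Z(1/|x−x₁| + u₀) + 2·Z((1/2)|Σ_{k=1}^N a_k λ^{2k+1}(−1)^k| + u₀)/Z(1/|t−t₁| + u₀). -/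
/-!
Since `cos A - cos B = -2 sin((A+B)/2) sin((A-B)/2)` and `(A-B)/2` splits into an `x`-part and a
`t`-part, everything reduces to `|sin (p/q)| ≤ Z(p+u₀)/Z(q+u₀)` for `p, q ≥ 0`. When `p ≥ q` this is
`|sin| ≤ 1` together with monotonicity of `Z`; when `p < q` it is `|sin y| ≤ |y|` followed by
`p/q ≤ (p+u₀)/(q+u₀) ≤ Z(p+u₀)/Z(q+u₀)`, the last step being the monotonicity of `u / Z u`.
-/

open Real Set

lemma abs_sin_abs (z : ℝ) : |sin (|z|)| = |sin z| := by
  rcases abs_choice z with h | h <;> simp [h]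

lemma abs_cos_sub_cos_le_two_mul_abs_sin (A B : ℝ) :
    |cos A - cos B| ≤ 2 * |sin ((A - B) / 2)| := by
  rw [cos_sub_cos, abs_mul, abs_mul, abs_neg, abs_two]
  gcongr
  calc 2 * |sin ((A + B) / 2)| ≤ 2 * 1 := by gcongr; exact abs_sin_le_one _
    _ = 2 := mul_one 2

lemma abs_sin_add_le (C D : ℝ) : |sin (C + D)| ≤ |sin C| + |sin D| := by
  rw [sin_add]
  refine (abs_add_le _ _).trans ?_
  rw [abs_mul, abs_mul]
  gcongr
  · exact mul_le_of_le_one_right (abs_nonneg _) (abs_cos_le_one _)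
  · exact mul_le_of_le_one_left (abs_nonneg _) (abs_cos_le_one _)

section

variable {Z : ℝ → ℝ} {u₀ : ℝ}

lemma nonneg_of_continuousOn_Ici_of_pos (hZcont : ContinuousOn Z (Ici 0))
    (hZpos : ∀ u : ℝ, 0 < u → 0 < Z u) {u : ℝ} (hu : 0 ≤ u) : 0 ≤ Z u := by
  rcases hu.lt_or_eq with hu | rfl
  · exact (hZpos u hu).le
  · have hlim : Filter.Tendsto Z (nhdsWithin 0 (Ioi 0)) (nhds (Z 0)) :=
      ((hZcont 0 self_mem_Ici).mono Ioi_subset_Ici_self).tendsto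
    exact ge_of_tendsto hlim (Filter.eventually_of_mem self_mem_nhdsWithin
      fun u hu => (hZpos u hu).le)

lemma div_le_div_of_div_monotone (hu₀ : 0 ≤ u₀) (hZpos : ∀ u : ℝ, 0 < u → 0 < Z u)
    (hratio : ∀ u v : ℝ, u₀ < u → u ≤ v → u / Z u ≤ v / Z v) {u v : ℝ} (hu : u₀ < u)
    (huv : u ≤ v) : u / v ≤ Z u / Z v := by
  have hZu : 0 < Z u := hZpos u (by linarith)
  have hZv : 0 < Z v := hZpos v (by linarith)
  have h := hratio u v hu huv
  rw [div_le_div_iff₀ hZu hZv] at h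
  rw [div_le_div_iff₀ (by linarith) hZv]
  linarith

lemma abs_sin_div_le (hu₀ : 0 ≤ u₀) (hZcont : ContinuousOn Z (Ici 0))
    (hZmono : StrictMonoOn Z (Ici 0)) (hZpos : ∀ u : ℝ, 0 < u → 0 < Z u)
    (hratio : ∀ u v : ℝ, u₀ < u → u ≤ v → u / Z u ≤ v / Z v)
    {p q : ℝ} (hp : 0 ≤ p) (hq : 0 ≤ q) :
    |sin (p / q)| ≤ Z (p + u₀) / Z (q + u₀) := by
  have hZnonneg {u : ℝ} (hu : 0 ≤ u) : 0 ≤ Z u :=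
    nonneg_of_continuousOn_Ici_of_pos hZcont hZpos hu
  rcases hp.eq_or_lt with rfl | hp
  · simpa using div_nonneg (hZnonneg hu₀) (hZnonneg (by linarith))
  rcases hq.eq_or_lt with rfl | hq
  · simpa using div_nonneg (hZnonneg (by linarith)) (hZnonneg hu₀)
  have hZq : 0 < Z (q + u₀) := hZpos _ (by linarith)
  rcases le_or_gt q p with hqp | hpq
  · have hZqp : Z (q + u₀) ≤ Z (p + u₀) :=
      hZmono.monotoneOn (by simp only [mem_Ici]; linarith) (by simp only [mem_Ici]; linarith)
        (by linarith)
    calc |sin (p / q)| ≤ 1 := abs_sin_le_one _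
      _ ≤ Z (p + u₀) / Z (q + u₀) := (one_le_div hZq).2 hZqp
  · calc |sin (p / q)| ≤ |p / q| := abs_sin_le_abs
      _ = p / q := abs_of_nonneg (by positivity)
      _ ≤ (p + u₀) / (q + u₀) := by
        rw [div_le_div_iff₀ hq (by linarith)]
        nlinarith
      _ ≤ Z (p + u₀) / Z (q + u₀) :=
        div_le_div_of_div_monotone hu₀ hZpos hratio (by linarith) (by linarith)

lemma abs_sin_mul_div_two_le (hu₀ : 0 ≤ u₀) (hZcont : ContinuousOn Z (Ici 0))
    (hZmono : StrictMonoOn Z (Ici 0)) (hZpos : ∀ u : ℝ, 0 < u → 0 < Z u)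
    (hratio : ∀ u v : ℝ, u₀ < u → u ≤ v → u / Z u ≤ v / Z v) (d w : ℝ) :
    |sin (d * w / 2)| ≤ Z (|w| / 2 + u₀) / Z (1 / |d| + u₀) := by
  have h : |d * w / 2| = (|w| / 2) / (1 / |d|) := by
    rw [abs_div, abs_mul, abs_two, div_div_eq_mul_div, div_one]
    ring
  rw [← abs_sin_abs, h]
  exact abs_sin_div_le hu₀ hZcont hZmono hZpos hratio (by positivity) (by positivity)

end

theorem kernel_increment_bound_Z_general (Z : ℝ → ℝ) (u₀ : ℝ) (hu₀ : 0 ≤ u₀)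
    (hZcont : ContinuousOn Z (Set.Ici 0))
    (hZmono : StrictMonoOn Z (Set.Ici 0))
    (hZpos : ∀ u : ℝ, 0 < u → 0 < Z u)
    (hratio : ∀ u v : ℝ, u₀ < u → u ≤ v → u / Z u ≤ v / Z v)
    (N : ℕ) (a : ℕ → ℝ) (lam x x₁ t t₁ : ℝ) :
    |Real.cos (x * lam + t * ∑ k ∈ Finset.Icc 1 N, a k * lam ^ (2 * k + 1) * (-1 : ℝ) ^ k)
      - Real.cos (x₁ * lam + t₁ * ∑ k ∈ Finset.Icc 1 N, a k * lam ^ (2 * k + 1) * (-1 : ℝ) ^ k)|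
    ≤ 2 * Z (|lam| / 2 + u₀) / Z (1 / |x - x₁| + u₀)
      + 2 * Z ((1 / 2) * |∑ k ∈ Finset.Icc 1 N, a k * lam ^ (2 * k + 1) * (-1 : ℝ) ^ k| + u₀)
          / Z (1 / |t - t₁| + u₀) := by
  set S := ∑ k ∈ Finset.Icc 1 N, a k * lam ^ (2 * k + 1) * (-1 : ℝ) ^ k
  have hxpart := abs_sin_mul_div_two_le hu₀ hZcont hZmono hZpos hratio (x - x₁) lam
  have htpart := abs_sin_mul_div_two_le hu₀ hZcont hZmono hZpos hratio (t - t₁) S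
  rw [one_div_mul_eq_div]
  calc |cos (x * lam + t * S) - cos (x₁ * lam + t₁ * S)|
      ≤ 2 * |sin ((x * lam + t * S - (x₁ * lam + t₁ * S)) / 2)| :=
        abs_cos_sub_cos_le_two_mul_abs_sin _ _
    _ = 2 * |sin ((x - x₁) * lam / 2 + (t - t₁) * S / 2)| := by ring_nf
    _ ≤ 2 * (|sin ((x - x₁) * lam / 2)| + |sin ((t - t₁) * S / 2)|) := by
        gcongr; exact abs_sin_add_le _ _
    _ ≤ 2 * (Z (|lam| / 2 + u₀) / Z (1 / |x - x₁| + u₀)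
          + Z (|S| / 2 + u₀) / Z (1 / |t - t₁| + u₀)) := by gcongr
    _ = _ := by ring

theorem kernel_increment_bound_Z (Z : ℝ → ℝ) (u₀ : ℝ) (hu₀ : 0 ≤ u₀)
    (hZcont : ContinuousOn Z (Set.Ici 0))
    (hZmono : StrictMonoOn Z (Set.Ici 0))
    (hZpos : ∀ u : ℝ, 0 < u → 0 < Z u)
    (hratio : ∀ u v : ℝ, u₀ < u → u ≤ v → u / Z u ≤ v / Z v)
    (N : ℕ) (a : ℕ → ℝ) (lam x x₁ t t₁ : ℝ) (hx : x ≠ x₁) (ht : t ≠ t₁) :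
    |Real.cos (x * lam + t * ∑ k ∈ Finset.Icc 1 N, a k * lam ^ (2 * k + 1) * (-1 : ℝ) ^ k)
      - Real.cos (x₁ * lam + t₁ * ∑ k ∈ Finset.Icc 1 N, a k * lam ^ (2 * k + 1) * (-1 : ℝ) ^ k)|
    ≤ 2 * Z (|lam| / 2 + u₀) / Z (1 / |x - x₁| + u₀)
      + 2 * Z ((1 / 2) * |∑ k ∈ Finset.Icc 1 N, a k * lam ^ (2 * k + 1) * (-1 : ℝ) ^ k| + u₀)
          / Z (1 / |t - t₁| + u₀) :=
  kernel_increment_bound_Z_general Z u₀ hu₀ hZcont hZmono hZpos hratio N a lam x x₁ t t₁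
end
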